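/- Let m ≥ 2 and let W1, W2 be Lagrangian subspaces of ℝ^{2m} (with the standard symplectic form Ω) such that dim(W1 ∩ W2) = m − 1. If W is a Lagrangian subspace with W ∉ {W1, W2} such that W ∩ (W1 + W2) is contained neither in W1 nor in W2, then there exists a Lagrangian symmetry g at W with g(W1) = W2 and g(W2) = W1. -/

import Mathlib

/-- The standard symplectic form on `ℝ^{2m}`:
`Ω(x,y) = Σ_{i=1}^m (x_i y_{m+i} − x_{m+i} y_i)`. -/
def Omega (m : ℕ) (x y : Fin (2 * m) → ℝ) : ℝ :=
  ∑ i : Fin m,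
    (x ⟨i.1, by have := i.2; omega⟩ * y ⟨m + i.1, by have := i.2; omega⟩ -
      x ⟨m + i.1, by have := i.2; omega⟩ * y ⟨i.1, by have := i.2; omega⟩)

/-- A subspace of `ℝ^{2m}` is Lagrangian if it has dimension `m` and `Ω` vanishes on it. -/
def IsLagrangian (m : ℕ) (W : Submodule ℝ (Fin (2 * m) → ℝ)) : Prop :=
  Module.finrank ℝ W = m ∧ ∀ x ∈ W, ∀ y ∈ W, Omega m x y = 0

/-- A *Lagrangian symmetry* at a Lagrangian subspace `W ⊆ ℝ^{2m}`:
an invertible linear map `g` such that for some `c ≠ 0`, `g w = c • w` for all `w ∈ W`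
and `Ω(g x, g y) = −c² Ω(x, y)` for all `x, y`. -/
def LagSym (m : ℕ) (W : Submodule ℝ (Fin (2 * m) → ℝ))
    (g : (Fin (2 * m) → ℝ) ≃ₗ[ℝ] (Fin (2 * m) → ℝ)) : Prop :=
  ∃ c : ℝ, c ≠ 0 ∧ (∀ w ∈ W, g w = c • w) ∧
    ∀ x y : Fin (2 * m) → ℝ, Omega m (g x) (g y) = -c ^ 2 * Omega m x y

/-!
Write a vector `v ∈ W ⊓ (W₁ ⊔ W₂)` lying outside `W₁ ∪ W₂` as `v = a + b` with `a ∈ W₁`,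
`b ∈ W₂`. With `U = W₁ ⊓ W₂` of codimension one, `W₁ = U ⊔ ℝa`, `W₂ = U ⊔ ℝb` and `Ω(a, b) ≠ 0`.
The isotropic subspace spanned by `a - b` and a complement of `U ⊓ W` in `U` meets `W` trivially
(pair with `a + b ∈ W`), so it extends to a Lagrangian complement `Λ` of `W`. The involution that
is `1` on `W` and `-1` on `Λ` is anti-symplectic, a Lagrangian symmetry at `W` with `c = 1`; it
fixes `a + b`, negates `a - b` and preserves `U`, hence swaps `a ↔ b` and `W₁ ↔ W₂`.
-/

open Module Submodule

namespace Submodule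

section Ring

variable {R M : Type*} [Ring R] [AddCommGroup M] [Module R M] {p q : Submodule R M}

noncomputable def reflectionOfIsCompl (h : IsCompl p q) : M ≃ₗ[R] M :=
  (prodEquivOfIsCompl p q h).symm ≪≫ₗ
    ((LinearEquiv.refl R p).prodCongr (LinearEquiv.neg R)) ≪≫ₗ prodEquivOfIsCompl p q h

lemma reflectionOfIsCompl_apply_of_mem_left (h : IsCompl p q) {x : M} (hx : x ∈ p) :
    reflectionOfIsCompl h x = x := by
  rw [reflectionOfIsCompl, LinearEquiv.trans_apply, LinearEquiv.trans_apply,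
    prodEquivOfIsCompl_symm_apply_left p q h ⟨x, hx⟩]
  simp

lemma reflectionOfIsCompl_apply_of_mem_right (h : IsCompl p q) {x : M} (hx : x ∈ q) :
    reflectionOfIsCompl h x = -x := by
  rw [reflectionOfIsCompl, LinearEquiv.trans_apply, LinearEquiv.trans_apply,
    prodEquivOfIsCompl_symm_apply_right p q h ⟨x, hx⟩]
  simp

lemma reflectionOfIsCompl_add (h : IsCompl p q) {y z : M} (hy : y ∈ p) (hz : z ∈ q) :
    reflectionOfIsCompl h (y + z) = y - z := by
  rw [map_add, reflectionOfIsCompl_apply_of_mem_left h hy,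
    reflectionOfIsCompl_apply_of_mem_right h hz, sub_eq_add_neg]

lemma map_reflectionOfIsCompl_le (h : IsCompl p q) {U : Submodule R M}
    (hU : U ≤ U ⊓ p ⊔ U ⊓ q) : U.map (reflectionOfIsCompl h : M →ₗ[R] M) ≤ U := by
  rintro _ ⟨u, hu, rfl⟩
  obtain ⟨y, hy, z, hz, rfl⟩ := mem_sup.mp (hU hu)
  rw [LinearEquiv.coe_coe, reflectionOfIsCompl_add h hy.2 hz.2]
  exact sub_mem hy.1 hz.1

lemma map_sup_span_singleton_le (f : M →ₗ[R] M) {U : Submodule R M} (hU : U.map f ≤ U) (x : M) :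
    (U ⊔ R ∙ x).map f ≤ U ⊔ R ∙ f x := by
  rw [map_sup, map_span, Set.image_singleton]
  exact sup_le_sup_right hU _

end Ring

variable {K V : Type*} [Field K] [AddCommGroup V] [Module K V] {p q : Submodule K V}

lemma reflectionOfIsCompl_eq_of_add_mem_of_sub_mem [NeZero (2 : K)] (h : IsCompl p q)
    {a b : V} (hp : a + b ∈ p) (hq : a - b ∈ q) : reflectionOfIsCompl h a = b := by
  have hadd := reflectionOfIsCompl_apply_of_mem_left h hp
  have hsub := reflectionOfIsCompl_apply_of_mem_right h hq
  rw [map_add] at hadd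
  rw [map_sub] at hsub
  exact smul_right_injective V (two_ne_zero (α := K)) <| by
    linear_combination (norm := module) hadd + hsub

lemma sup_span_singleton_eq_of_finrank_le [FiniteDimensional K V] {U P : Submodule K V} {x : V}
    (hUP : U ≤ P) (hx : x ∈ P) (hxU : x ∉ U) (h : finrank K P ≤ finrank K U + 1) :
    U ⊔ K ∙ x = P := by
  have hlt := finrank_lt_finrank_of_lt (lt_sup_iff_notMem.mpr hxU)
  exact eq_of_le_of_finrank_le (sup_le hUP ((span_singleton_le_iff_mem _ _).mpr hx)) (by omega)

end Submodule

namespace LinearMap.BilinForm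

section CommRing

variable {R M : Type*} [CommRing R] [AddCommGroup M] [Module R M] {B : LinearMap.BilinForm R M}

lemma orthogonal_sup (P Q : Submodule R M) :
    B.orthogonal (P ⊔ Q) = B.orthogonal P ⊓ B.orthogonal Q := by
  refine le_antisymm (le_inf (orthogonal_le le_sup_left) (orthogonal_le le_sup_right)) ?_
  rintro x ⟨hP, hQ⟩ _ hn
  obtain ⟨p, hp, q, hq, rfl⟩ := mem_sup.mp hn
  rw [map_add, LinearMap.add_apply, hP p hp, hQ q hq, add_zero]

lemma le_orthogonal_comm (hB : B.IsRefl) {P Q : Submodule R M} (h : P ≤ B.orthogonal Q) :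
    Q ≤ B.orthogonal P :=
  fun _ hq _ hp => hB _ _ (h hp _ hq)

lemma mem_orthogonal_span_singleton_iff {x y : M} : y ∈ B.orthogonal (R ∙ x) ↔ B x y = 0 := by
  refine ⟨fun h => h x (mem_span_singleton_self x), fun h n hn => ?_⟩
  obtain ⟨c, rfl⟩ := mem_span_singleton.mp hn
  rw [map_smul, LinearMap.smul_apply, h, smul_zero]

lemma span_singleton_le_orthogonal (hB : B.IsAlt) (x : M) : R ∙ x ≤ B.orthogonal (R ∙ x) :=
  (span_singleton_le_iff_mem _ _).mpr (mem_orthogonal_span_singleton_iff.mpr (hB.self_eq_zero x))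

lemma sup_le_orthogonal_sup (hB : B.IsRefl) {P Q : Submodule R M} (hP : P ≤ B.orthogonal P)
    (hQ : Q ≤ B.orthogonal Q) (hPQ : Q ≤ B.orthogonal P) : P ⊔ Q ≤ B.orthogonal (P ⊔ Q) := by
  rw [orthogonal_sup]
  exact sup_le (le_inf hP (le_orthogonal_comm hB hPQ)) (le_inf hPQ hQ)

lemma reflectionOfIsCompl_apply_apply {p q : Submodule R M} (h : IsCompl p q)
    (hp : p ≤ B.orthogonal p) (hq : q ≤ B.orthogonal q) (x y : M) :
    B (reflectionOfIsCompl h x) (reflectionOfIsCompl h y) = -B x y := by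
  have hpq : ∀ z : M, z ∈ p ⊔ q := fun z => h.sup_eq_top ▸ mem_top
  obtain ⟨x₁, hx₁, x₂, hx₂, rfl⟩ := mem_sup.mp (hpq x)
  obtain ⟨y₁, hy₁, y₂, hy₂, rfl⟩ := mem_sup.mp (hpq y)
  rw [reflectionOfIsCompl_add h hx₁ hx₂, reflectionOfIsCompl_add h hy₁ hy₂]
  simp only [map_add, map_sub, LinearMap.add_apply, LinearMap.sub_apply, hp hy₁ x₁ hx₁,
    hq hy₂ x₂ hx₂]
  ring

end CommRing

variable {K V : Type*} [Field K] [AddCommGroup V] [Module K V] {B : LinearMap.BilinForm K V}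

lemma disjoint_span_singleton_sup {W S : Submodule K V} (hW : W ≤ B.orthogonal W) {u v : V}
    (hv : v ∈ W) (huv : B u v ≠ 0) (hvS : v ∈ B.orthogonal S) (hSW : Disjoint S W) :
    Disjoint (K ∙ u ⊔ S) W := by
  rw [disjoint_def]
  rintro _ hy hyW
  obtain ⟨_, hz, s, hs, rfl⟩ := mem_sup.mp hy
  obtain ⟨c, rfl⟩ := mem_span_singleton.mp hz
  obtain rfl : c = 0 := by
    have h0 : B (c • u + s) v = 0 := hW hv _ hyW
    rw [map_add, map_smul, LinearMap.add_apply, LinearMap.smul_apply, hvS s hs, add_zero,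
      smul_eq_mul] at h0
    exact (mul_eq_zero.mp h0).resolve_right huv
  rw [zero_smul, zero_add] at hyW ⊢
  exact disjoint_def.mp hSW s hs hyW

variable [FiniteDimensional K V]

-- Lagrangian subspaces are encoded as `B.orthogonal L = L`, isotropic ones as `L ≤ B.orthogonal L`.
lemma two_mul_finrank_of_orthogonal_eq_self (hB : B.Nondegenerate) {L : Submodule K V}
    (hL : B.orthogonal L = L) : 2 * finrank K L = finrank K V := by
  have h := finrank_orthogonal hB L
  have := L.finrank_le
  rw [hL] at h
  omega

lemma orthogonal_eq_self_of_le_of_finrank_le (hB : B.Nondegenerate) {L : Submodule K V}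
    (hL : L ≤ B.orthogonal L) (h : finrank K V ≤ 2 * finrank K L) : B.orthogonal L = L :=
  (eq_of_le_of_finrank_le hL (by rw [finrank_orthogonal hB]; omega)).symm

/- `N = W ⊓ B.orthogonal Λ` has dimension `dim W - dim Λ`, so `Λ ⊔ N` is a proper subspace of
`B.orthogonal Λ` unless `Λ` is Lagrangian; any `x ∈ B.orthogonal Λ` outside `Λ ⊔ N` can be
adjoined to `Λ` without meeting `W`. -/
lemma exists_gt_le_orthogonal_disjoint (hB : B.Nondegenerate) (hA : B.IsAlt)
    {W Λ : Submodule K V} (hW : B.orthogonal W = W) (hΛ : Λ ≤ B.orthogonal Λ)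
    (hΛW : Disjoint Λ W) (hne : B.orthogonal Λ ≠ Λ) :
    ∃ Λ', Λ < Λ' ∧ Λ' ≤ B.orthogonal Λ' ∧ Disjoint Λ' W := by
  set N := W ⊓ B.orthogonal Λ
  have hN : finrank K N + finrank K W + finrank K Λ = finrank K V := by
    have hsup := finrank_sup_add_finrank_inf_eq W Λ
    rw [hΛW.symm.eq_bot, finrank_bot] at hsup
    have hNeq : N = B.orthogonal (W ⊔ Λ) := by rw [orthogonal_sup, hW]
    have hNrank := finrank_orthogonal hB (W ⊔ Λ)
    rw [← hNeq] at hNrank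
    have := (W ⊔ Λ).finrank_le
    omega
  have hlt : Λ ⊔ N < B.orthogonal Λ := by
    refine lt_of_le_of_ne (sup_le hΛ inf_le_right) fun heq => hne ?_
    have h := finrank_add_le_finrank_add_finrank Λ N
    have := two_mul_finrank_of_orthogonal_eq_self hB hW
    rw [heq, finrank_orthogonal hB] at h
    exact orthogonal_eq_self_of_le_of_finrank_le hB hΛ (by omega)
  obtain ⟨x, hx, hxΛN⟩ := SetLike.exists_of_lt hlt
  refine ⟨Λ ⊔ K ∙ x, lt_sup_iff_notMem.mpr fun h => hxΛN (mem_sup_left h),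
    sup_le_orthogonal_sup hA.isRefl hΛ (span_singleton_le_orthogonal hA x)
      ((span_singleton_le_iff_mem _ _).mpr hx), ?_⟩
  rw [disjoint_def]
  rintro _ hy hyW
  obtain ⟨l, hl, _, hz, rfl⟩ := mem_sup.mp hy
  obtain ⟨c, rfl⟩ := mem_span_singleton.mp hz
  rcases eq_or_ne c 0 with rfl | hc
  · rw [zero_smul, add_zero] at hyW ⊢
    exact disjoint_def.mp hΛW l hl hyW
  · have hyN : l + c • x ∈ N := ⟨hyW, add_mem (hΛ hl) (smul_mem _ c hx)⟩
    have hx' : x = c⁻¹ • ((l + c • x) - l) := by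
      rw [add_sub_cancel_left, smul_smul, inv_mul_cancel₀ hc, one_smul]
    exact absurd (hx' ▸ smul_mem _ _ (sub_mem (mem_sup_right hyN) (mem_sup_left hl))) hxΛN

theorem exists_orthogonal_eq_self_isCompl (hB : B.Nondegenerate) (hA : B.IsAlt)
    {W T : Submodule K V} (hW : B.orthogonal W = W) (hT : T ≤ B.orthogonal T)
    (hTW : Disjoint T W) : ∃ Λ, B.orthogonal Λ = Λ ∧ T ≤ Λ ∧ IsCompl W Λ := by
  obtain ⟨Λ, ⟨hTΛ, hΛ, hΛW⟩, hmax⟩ := WellFoundedGT.exists_maximal (α := Submodule K V)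
    inferInstance {Λ | T ≤ Λ ∧ Λ ≤ B.orthogonal Λ ∧ Disjoint Λ W} ⟨T, le_rfl, hT, hTW⟩
  have hΛ_eq : B.orthogonal Λ = Λ := by
    by_contra hne
    obtain ⟨Λ', hlt, hΛ', hΛ'W⟩ := exists_gt_le_orthogonal_disjoint hB hA hW hΛ hΛW hne
    exact hlt.not_ge (hmax ⟨hTΛ.trans hlt.le, hΛ', hΛ'W⟩ hlt.le)
  refine ⟨Λ, hΛ_eq, hTΛ, (isCompl_iff_disjoint W Λ ?_).mpr hΛW.symm⟩
  have := two_mul_finrank_of_orthogonal_eq_self hB hW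
  have := two_mul_finrank_of_orthogonal_eq_self hB hΛ_eq
  omega

variable [NeZero (2 : K)]

lemma exists_orthogonal_eq_self_isCompl_sub_mem (hB : B.Nondegenerate) (hA : B.IsAlt)
    {W W₁ W₂ : Submodule K V} (hW : B.orthogonal W = W) (hW₁ : W₁ ≤ B.orthogonal W₁)
    (hW₂ : W₂ ≤ B.orthogonal W₂) {a b : V} (ha : a ∈ W₁) (hb : b ∈ W₂) (hv : a + b ∈ W)
    (hab : B a b ≠ 0) :
    ∃ Λ, B.orthogonal Λ = Λ ∧ IsCompl W Λ ∧ a - b ∈ Λ ∧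
      W₁ ⊓ W₂ ≤ W₁ ⊓ W₂ ⊓ W ⊔ W₁ ⊓ W₂ ⊓ Λ := by
  set U := W₁ ⊓ W₂
  obtain ⟨S, hUWS, hUS⟩ := IsModularLattice.exists_disjoint_and_sup_eq (inf_le_left : U ⊓ W ≤ U)
  have hSU : S ≤ U := hUS ▸ le_sup_right
  have hSW : Disjoint S W := by
    rw [disjoint_iff, ← inf_eq_left.mpr hSU, inf_assoc]
    exact hUWS.symm.eq_bot
  have hSW₁ : S ≤ W₁ := hSU.trans inf_le_left
  have haU : a ∈ B.orthogonal U := orthogonal_le inf_le_left (hW₁ ha)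
  have hbU : b ∈ B.orthogonal U := orthogonal_le inf_le_right (hW₂ hb)
  have hpair : B (a - b) (a + b) ≠ 0 := by
    have h : B (a - b) (a + b) = 2 * B a b := by
      simp only [map_sub, map_add, LinearMap.sub_apply, hA.self_eq_zero, ← hA.neg_eq a b]
      ring
    rw [h]
    exact mul_ne_zero two_ne_zero hab
  have hT : K ∙ (a - b) ⊔ S ≤ B.orthogonal (K ∙ (a - b) ⊔ S) :=
    sup_le_orthogonal_sup hA.isRefl (span_singleton_le_orthogonal hA _)
      (hSW₁.trans (hW₁.trans (orthogonal_le hSW₁)))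
      (le_orthogonal_comm hA.isRefl ((span_singleton_le_iff_mem _ _).mpr
        (orthogonal_le hSU (sub_mem haU hbU))))
  obtain ⟨Λ, hΛ, hTΛ, hWΛ⟩ := exists_orthogonal_eq_self_isCompl hB hA hW hT
    (disjoint_span_singleton_sup hW.ge hv hpair (orthogonal_le hSU (add_mem haU hbU)) hSW)
  refine ⟨Λ, hΛ, hWΛ, hTΛ (mem_sup_left (mem_span_singleton_self _)), ?_⟩
  calc U = U ⊓ W ⊔ S := hUS.symm
    _ ≤ U ⊓ W ⊔ U ⊓ Λ := sup_le_sup_left (le_inf hSU (le_sup_right.trans hTΛ)) _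

theorem exists_antisymplectic_swap (hB : B.Nondegenerate) (hA : B.IsAlt)
    {W W₁ W₂ : Submodule K V} (hW : B.orthogonal W = W) (hW₁ : B.orthogonal W₁ = W₁)
    (hW₂ : B.orthogonal W₂ = W₂) (hrank : finrank K W₁ ≤ finrank K ↥(W₁ ⊓ W₂) + 1) {v : V}
    (hvW : v ∈ W) (hv : v ∈ W₁ ⊔ W₂) (hv₁ : v ∉ W₁) (hv₂ : v ∉ W₂) :
    ∃ g : V ≃ₗ[K] V, (∀ w ∈ W, g w = w) ∧ (∀ x y, B (g x) (g y) = -B x y) ∧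
      W₁.map (g : V →ₗ[K] V) = W₂ ∧ W₂.map (g : V →ₗ[K] V) = W₁ := by
  obtain ⟨a, ha, b, hb, rfl⟩ := mem_sup.mp hv
  have hrank₁₂ : finrank K W₁ = finrank K W₂ := by
    have := two_mul_finrank_of_orthogonal_eq_self hB hW₁
    have := two_mul_finrank_of_orthogonal_eq_self hB hW₂
    omega
  have hb₁ : b ∉ W₁ := fun h => hv₁ (add_mem ha h)
  have hW₁a : W₁ ⊓ W₂ ⊔ K ∙ a = W₁ := sup_span_singleton_eq_of_finrank_le inf_le_left ha
    (fun h => hv₂ (add_mem h.2 hb)) hrank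
  have hW₂b : W₁ ⊓ W₂ ⊔ K ∙ b = W₂ := sup_span_singleton_eq_of_finrank_le inf_le_right hb
    (fun h => hb₁ h.1) (hrank₁₂ ▸ hrank)
  -- otherwise `b` would be orthogonal to all of `W₁ = (W₁ ⊓ W₂) ⊔ K ∙ a`, i.e. lie in `W₁`
  have hab : B a b ≠ 0 := fun h => hb₁ <| by
    rw [← hW₁, ← hW₁a, orthogonal_sup]
    exact ⟨orthogonal_le inf_le_right (hW₂.ge hb), mem_orthogonal_span_singleton_iff.mpr h⟩
  obtain ⟨Λ, hΛ, hWΛ, habΛ, hU⟩ := exists_orthogonal_eq_self_isCompl_sub_mem hB hA hW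
    hW₁.ge hW₂.ge ha hb hvW hab
  set g := reflectionOfIsCompl hWΛ
  have hga : g a = b := reflectionOfIsCompl_eq_of_add_mem_of_sub_mem hWΛ hvW habΛ
  have hgb : g b = a := reflectionOfIsCompl_eq_of_add_mem_of_sub_mem hWΛ (add_comm a b ▸ hvW)
    (neg_sub a b ▸ neg_mem habΛ)
  have hgU := map_reflectionOfIsCompl_le hWΛ hU
  have hmap : ∀ {P Q : Submodule K V}, finrank K P = finrank K Q →
      P.map (g : V →ₗ[K] V) ≤ Q → P.map (g : V →ₗ[K] V) = Q := fun hPQ h =>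
    eq_of_le_of_finrank_eq h (by rw [LinearEquiv.finrank_map_eq, hPQ])
  refine ⟨g, fun w hw => reflectionOfIsCompl_apply_of_mem_left hWΛ hw,
    reflectionOfIsCompl_apply_apply hWΛ hW.ge hΛ.ge, hmap hrank₁₂ ?_, hmap hrank₁₂.symm ?_⟩
  · have h := map_sup_span_singleton_le _ hgU a
    rwa [LinearEquiv.coe_coe, hga, hW₁a, hW₂b] at h
  · have h := map_sup_span_singleton_le _ hgU b
    rwa [LinearEquiv.coe_coe, hgb, hW₁a, hW₂b] at h

end LinearMap.BilinForm

noncomputable def omegaForm (m : ℕ) : LinearMap.BilinForm ℝ (Fin (2 * m) → ℝ) :=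
  LinearMap.mk₂ ℝ (Omega m)
    (fun _ _ _ => by
      simp only [Omega, Pi.add_apply, ← Finset.sum_add_distrib]
      exact Finset.sum_congr rfl fun _ _ => by ring)
    (fun _ _ _ => by
      simp only [Omega, Pi.smul_apply, smul_eq_mul, Finset.mul_sum]
      exact Finset.sum_congr rfl fun _ _ => by ring)
    (fun _ _ _ => by
      simp only [Omega, Pi.add_apply, ← Finset.sum_add_distrib]
      exact Finset.sum_congr rfl fun _ _ => by ring)
    (fun _ _ _ => by
      simp only [Omega, Pi.smul_apply, smul_eq_mul, Finset.mul_sum]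
      exact Finset.sum_congr rfl fun _ _ => by ring)

@[simp] lemma omegaForm_apply (m : ℕ) (x y : Fin (2 * m) → ℝ) :
    omegaForm m x y = Omega m x y := rfl

lemma omegaForm_isAlt (m : ℕ) : (omegaForm m).IsAlt :=
  fun _ => (omegaForm_apply ..).trans (Finset.sum_eq_zero fun _ _ => by ring)

def stdComplexStructure (m : ℕ) (x : Fin (2 * m) → ℝ) : Fin (2 * m) → ℝ := fun k =>
  if h : k.1 < m then -x ⟨m + k, by omega⟩ else x ⟨k - m, by omega⟩

lemma Omega_stdComplexStructure (m : ℕ) (x : Fin (2 * m) → ℝ) :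
    Omega m x (stdComplexStructure m x) = ∑ i : Fin m,
      (x ⟨i, by omega⟩ ^ 2 + x ⟨m + i, by omega⟩ ^ 2) := by
  refine Finset.sum_congr rfl fun i _ => ?_
  simp only [stdComplexStructure, dif_pos i.2, show ¬m + i.1 < m by omega, dif_neg,
    not_false_eq_true, Nat.add_sub_cancel_left]
  ring

lemma omegaForm_nondegenerate (m : ℕ) : (omegaForm m).Nondegenerate := by
  refine (omegaForm_isAlt m).isRefl.nondegenerate_iff_separatingLeft.mpr fun x hx => ?_
  have hsq := Omega_stdComplexStructure m x ▸ (omegaForm_apply ..).symm.trans (hx _)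
  have hzero : ∀ i : Fin m, x ⟨i, by omega⟩ = 0 ∧ x ⟨m + i, by omega⟩ = 0 := fun i => by
    have := (Finset.sum_eq_zero_iff_of_nonneg (fun i _ => by positivity)).mp hsq i
      (Finset.mem_univ i)
    exact ⟨by nlinarith [sq_nonneg (x ⟨m + i, by omega⟩)],
      by nlinarith [sq_nonneg (x ⟨i, by omega⟩)]⟩
  funext k
  rcases lt_or_ge k.1 m with hk | hk
  · exact (hzero ⟨k, hk⟩).1
  · obtain ⟨j, hj⟩ := Nat.exists_eq_add_of_le hk
    have := (hzero ⟨j, by omega⟩).2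
    rwa [show (⟨m + j, _⟩ : Fin (2 * m)) = k from Fin.ext hj.symm] at this

lemma IsLagrangian.orthogonal_eq {m : ℕ} {W : Submodule ℝ (Fin (2 * m) → ℝ)}
    (hW : IsLagrangian m W) : (omegaForm m).orthogonal W = W :=
  LinearMap.BilinForm.orthogonal_eq_self_of_le_of_finrank_le (omegaForm_nondegenerate m)
    (fun _ hx _ hy => hW.2 _ hy _ hx) (by rw [finrank_fin_fun, hW.1])

theorem stmt5_general (m : ℕ)
    (W1 W2 : Submodule ℝ (Fin (2 * m) → ℝ))
    (h1 : IsLagrangian m W1) (h2 : IsLagrangian m W2)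
    (hint : Module.finrank ℝ ↥(W1 ⊓ W2) = m - 1)
    (W : Submodule ℝ (Fin (2 * m) → ℝ)) (hW : IsLagrangian m W)
    (hnc1 : ¬ W ⊓ (W1 ⊔ W2) ≤ W1) (hnc2 : ¬ W ⊓ (W1 ⊔ W2) ≤ W2) :
    ∃ g : (Fin (2 * m) → ℝ) ≃ₗ[ℝ] (Fin (2 * m) → ℝ), LagSym m W g ∧
      W1.map (g : (Fin (2 * m) → ℝ) →ₗ[ℝ] (Fin (2 * m) → ℝ)) = W2 ∧
      W2.map (g : (Fin (2 * m) → ℝ) →ₗ[ℝ] (Fin (2 * m) → ℝ)) = W1 := by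
  -- a subgroup contained in neither of two subgroups is not covered by their union
  obtain ⟨v, ⟨hvW, hv⟩, hv₁₂⟩ := Set.not_subset.mp
    (mt AddSubgroupClass.subset_union.mp (not_or.mpr ⟨hnc1, hnc2⟩))
  obtain ⟨g, hgW, hgΩ, h12, h21⟩ := LinearMap.BilinForm.exists_antisymplectic_swap
    (omegaForm_nondegenerate m) (omegaForm_isAlt m) hW.orthogonal_eq h1.orthogonal_eq
    h2.orthogonal_eq (by rw [h1.1, hint]; omega) hvW hv (fun h => hv₁₂ (Or.inl h))
    (fun h => hv₁₂ (Or.inr h))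
  exact ⟨g, ⟨1, one_ne_zero, by simpa using hgW, by simpa using hgΩ⟩, h12, h21⟩

theorem stmt5 (m : ℕ) (hm : 2 ≤ m)
    (W1 W2 : Submodule ℝ (Fin (2 * m) → ℝ))
    (h1 : IsLagrangian m W1) (h2 : IsLagrangian m W2)
    (hint : Module.finrank ℝ ↥(W1 ⊓ W2) = m - 1)
    (W : Submodule ℝ (Fin (2 * m) → ℝ)) (hW : IsLagrangian m W)
    (hne1 : W ≠ W1) (hne2 : W ≠ W2)
    (hnc1 : ¬ W ⊓ (W1 ⊔ W2) ≤ W1) (hnc2 : ¬ W ⊓ (W1 ⊔ W2) ≤ W2) :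
    ∃ g : (Fin (2 * m) → ℝ) ≃ₗ[ℝ] (Fin (2 * m) → ℝ), LagSym m W g ∧
      W1.map (g : (Fin (2 * m) → ℝ) →ₗ[ℝ] (Fin (2 * m) → ℝ)) = W2 ∧
      W2.map (g : (Fin (2 * m) → ℝ) →ₗ[ℝ] (Fin (2 * m) → ℝ)) = W1 :=
  stmt5_general m W1 W2 h1 h2 hint W hW hnc1 hnc2
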